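/- arXiv:2206.04033 — 3 statements merged into one kernel-verified Lean document; each statement's English description precedes it below -/
import Mathlib

section
/- Let ζ be strictly increasing and continuous on [0,T], α ∈ (0,1), ω(t_n) > 0, and define for 1 ≤ l ≤ n the coefficient a_{n-l} = (ω(t_n)^{-1}/Γ(2-α)) · ((ζ(t_n)-ζ(t_{l-1}))^{1-α} - (ζ(t_n)-ζ(t_l))^{1-α}) / (ζ(t_l)-ζ(t_{l-1})). Then all a_{n-l} are positive and strictly increasing in l, i.e., 0 < a_{n-1} < a_{n-2} < ... < a_1 < a_0. -/
open Real

/-- Secant slopes of `x ^ β` (for `0 < β < 1`) strictly decrease as the interval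
moves right within `[0, ∞)`. -/
lemma slope_rpow_anti {β x y z w : ℝ} (hβ0 : 0 < β) (hβ1 : β < 1)
    (hx : 0 ≤ x) (hxy : x < y) (hyz : y ≤ z) (hzw : z < w) :
    (w ^ β - z ^ β) / (w - z) < (y ^ β - x ^ β) / (y - x) := by
  have h := Real.strictConcaveOn_rpow hβ0 hβ1
  rcases eq_or_lt_of_le hyz with rfl | hyz'
  · exact h.slope_anti_adjacent (Set.mem_Ici.2 hx)
      (Set.mem_Ici.2 (by linarith)) hxy hzw
  · have h1 : (z ^ β - y ^ β) / (z - y) < (y ^ β - x ^ β) / (y - x) :=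
      h.slope_anti_adjacent (Set.mem_Ici.2 hx) (Set.mem_Ici.2 (by linarith)) hxy hyz'
    have h2 : (w ^ β - z ^ β) / (w - z) < (z ^ β - y ^ β) / (z - y) :=
      h.slope_anti_adjacent (Set.mem_Ici.2 (by linarith)) (Set.mem_Ici.2 (by linarith)) hyz' hzw
    linarith

/-- With ζ strictly increasing and continuous on [0,T], α ∈ (0,1), ω(t_n) > 0,
the L1-type coefficients a_{n-l} (indexed here by l = 1,…,n, so that larger l
means smaller subscript n-l) are positive and strictly increasing in l:
0 < a_{n-1} < a_{n-2} < ... < a_1 < a_0. -/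
theorem stmt_1 (T α τ : ℝ) (ζ ω : ℝ → ℝ) (n : ℕ)
    (t : ℕ → ℝ) (hτ : 0 < τ) (htgrid : ∀ i, t i = i * τ)
    (h0 : t 0 = 0) (hT : t n = T) (hn : 1 ≤ n)
    (hζ : StrictMonoOn ζ (Set.Icc 0 T)) (hζc : ContinuousOn ζ (Set.Icc 0 T))
    (hα0 : 0 < α) (hα1 : α < 1) (hω : 0 < ω (t n))
    (a : ℕ → ℝ)
    (ha : ∀ l, a l = (ω (t n))⁻¹ / Real.Gamma (2 - α) *
      (((ζ (t n) - ζ (t (l - 1))) ^ (1 - α) - (ζ (t n) - ζ (t l)) ^ (1 - α)) /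
        (ζ (t l) - ζ (t (l - 1))))) :
    (∀ l, 1 ≤ l → l ≤ n → 0 < a l) ∧
      (∀ l l', 1 ≤ l → l < l' → l' ≤ n → a l < a l') := by
  have tmono : StrictMono t := by
    intro i j hij
    rw [htgrid, htgrid]
    exact mul_lt_mul_of_pos_right (by exact_mod_cast hij) hτ
  have tmem : ∀ i, i ≤ n → t i ∈ Set.Icc 0 T := by
    intro i hi
    constructor
    · rw [htgrid]; positivity
    · rw [← hT]; exact (tmono.le_iff_le).2 hi
  have hβ0 : 0 < 1 - α := by linarith
  have hβ1 : 1 - α < 1 := by linarith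
  have hC : 0 < (ω (t n))⁻¹ / Real.Gamma (2 - α) := by
    have : 0 < Real.Gamma (2 - α) := Real.Gamma_pos_of_pos (by linarith)
    positivity
  -- ζ-value comparisons
  have hζlt : ∀ i j, i < j → j ≤ n → ζ (t i) < ζ (t j) := fun i j hij hj =>
    hζ (tmem i (le_trans hij.le hj)) (tmem j hj) (tmono hij)
  have hζle : ∀ i j, i ≤ j → j ≤ n → ζ (t i) ≤ ζ (t j) := by
    intro i j hij hj
    rcases eq_or_lt_of_le hij with rfl | h
    · exact le_refl _
    · exact (hζlt i j h hj).le
  refine ⟨?_, ?_⟩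
  · intro l hl hln
    rw [ha l]
    have h1 : ζ (t (l - 1)) < ζ (t l) :=
      hζlt (l - 1) l (Nat.sub_lt hl one_pos) hln
    have h2 : ζ (t l) ≤ ζ (t n) := hζle l n hln (le_refl n)
    have hx : (0:ℝ) ≤ ζ (t n) - ζ (t l) := by linarith
    have hxy : ζ (t n) - ζ (t l) < ζ (t n) - ζ (t (l - 1)) := by linarith
    have hnum : (ζ (t n) - ζ (t l)) ^ (1 - α) < (ζ (t n) - ζ (t (l - 1))) ^ (1 - α) :=
      Real.rpow_lt_rpow hx hxy hβ0
    have hden : 0 < ζ (t l) - ζ (t (l - 1)) := by linarith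
    have : 0 < ((ζ (t n) - ζ (t (l - 1))) ^ (1 - α) - (ζ (t n) - ζ (t l)) ^ (1 - α)) /
        (ζ (t l) - ζ (t (l - 1))) := div_pos (by linarith) hden
    exact mul_pos hC this
  · intro l l' hl hll' hl'n
    rw [ha l, ha l']
    have hln : l ≤ n := le_trans hll'.le hl'n
    have h1 : ζ (t (l - 1)) < ζ (t l) := hζlt (l - 1) l (Nat.sub_lt hl one_pos) hln
    have h1' : ζ (t (l' - 1)) < ζ (t l') := hζlt (l' - 1) l' (Nat.sub_lt (le_trans hl hll'.le) one_pos) hl'n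
    have h2 : ζ (t l') ≤ ζ (t n) := hζle l' n hl'n (le_refl n)
    have h3 : ζ (t l) ≤ ζ (t (l' - 1)) := hζle l (l' - 1) (Nat.le_sub_one_of_lt hll') (le_trans (Nat.sub_le _ _) hl'n)
    set x' := ζ (t n) - ζ (t l') with hx'def
    set y' := ζ (t n) - ζ (t (l' - 1)) with hy'def
    set x := ζ (t n) - ζ (t l) with hxdef
    set y := ζ (t n) - ζ (t (l - 1)) with hydef
    have key : (y ^ (1 - α) - x ^ (1 - α)) / (y - x) <
        (y' ^ (1 - α) - x' ^ (1 - α)) / (y' - x') :=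
      slope_rpow_anti hβ0 hβ1 (by simp [hx'def]; linarith) (by simp [hx'def, hy'def]; linarith)
        (by simp [hy'def, hxdef]; linarith) (by simp [hxdef, hydef]; linarith)
    have e : ζ (t l) - ζ (t (l - 1)) = y - x := by rw [hxdef, hydef]; ring
    have e' : ζ (t l') - ζ (t (l' - 1)) = y' - x' := by rw [hx'def, hy'def]; ring
    rw [e, e']
    exact mul_lt_mul_of_pos_left key hC
end

section
/- Let ζ be strictly increasing on [0,T], ω(t_n) > 0, α ∈ (0,1), and define b_{n-l} = (ω(t_n)^{-1}/Γ(2-α)) · [ (1/(2-α))·((ζ(t_n)-ζ(t_{l-1}))^{2-α} - (ζ(t_n)-ζ(t_l))^{2-α})/(ζ(t_l)-ζ(t_{l-1}))^2 - (1/2)·((ζ(t_n)-ζ(t_{l-1}))^{1-α} + (ζ(t_n)-ζ(t_l))^{1-α})/(ζ(t_l)-ζ(t_{l-1})) ] for 2 ≤ l ≤ n. Then b_{n-l} > 0 for all such l. -/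
open Real

private lemma mvt_rpow (q B x : ℝ) (hq0 : 0 < q) (hq1 : q < 1) (hB : 0 < B) (hBx : B < x) :
    (x - B) * (q * x ^ (q - 1)) < x ^ q - B ^ q := by
  have hcont : ContinuousOn (fun y : ℝ => y ^ q) (Set.Icc B x) := by
    intro y hy
    exact (Real.continuousAt_rpow_const y q (Or.inl (by linarith [hy.1]))).continuousWithinAt
  have hderiv : ∀ y ∈ Set.Ioo B x, HasDerivAt (fun y : ℝ => y ^ q) (q * y ^ (q - 1)) y :=
    fun y hy => Real.hasDerivAt_rpow_const (Or.inl (by linarith [hy.1]))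
  obtain ⟨c, hc, hceq⟩ := exists_hasDerivAt_eq_slope (fun y : ℝ => y ^ q)
    (fun y => q * y ^ (q - 1)) hBx hcont hderiv
  have hxB : (0:ℝ) < x - B := by linarith
  have hlt : x ^ (q - 1) < c ^ (q - 1) :=
    Real.rpow_lt_rpow_of_neg (by linarith [hc.1]) hc.2 (by linarith)
  have hc2 : q * c ^ (q - 1) = (x ^ q - B ^ q) / (x - B) := hceq
  have : (x - B) * (q * x ^ (q - 1)) < (x - B) * (q * c ^ (q - 1)) := by
    apply mul_lt_mul_of_pos_left _ hxB
    exact mul_lt_mul_of_pos_left hlt hq0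
  rw [hc2, mul_div_cancel₀ _ (ne_of_gt hxB)] at this
  exact this

private lemma trapezoid_lt (p B A : ℝ) (hp1 : 1 < p) (hp2 : p < 2) (hB : 0 ≤ B)
    (hBA : B < A) :
    (A - B) * (A ^ (p - 1) + B ^ (p - 1)) / 2 < (A ^ p - B ^ p) / p := by
  have hp0 : (0:ℝ) < p := by linarith
  rcases eq_or_lt_of_le hB with hB0 | hB0
  · -- B = 0
    subst hB0
    have hA : 0 < A := hBA
    rw [Real.zero_rpow (by linarith : p - 1 ≠ 0), Real.zero_rpow (ne_of_gt hp0)]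
    have hAp : A * A ^ (p - 1) = A ^ p := by
      nth_rewrite 1 [← Real.rpow_one A]
      rw [← Real.rpow_add hA]
      ring_nf
    have hApos : 0 < A ^ p := Real.rpow_pos_of_pos hA p
    have h12 : A ^ p / 2 < A ^ p / p := by
      apply div_lt_div_of_pos_left hApos hp0 hp2
    calc (A - 0) * (A ^ (p - 1) + 0) / 2 = A ^ p / 2 := by rw [← hAp]; ring
      _ < (A ^ p - 0) / p := by rw [sub_zero]; exact h12
  · -- B > 0
    set F : ℝ → ℝ := fun x => (x ^ p - B ^ p) / p - (x - B) * (x ^ (p - 1) + B ^ (p - 1)) / 2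
      with hF
    have hasD : ∀ x : ℝ, 0 < x → HasDerivAt F
        (p * x ^ (p - 1) / p -
          (1 * (x ^ (p - 1) + B ^ (p - 1)) + (x - B) * ((p - 1) * x ^ (p - 1 - 1))) / 2) x := by
      intro x hx
      have h1 : HasDerivAt (fun y : ℝ => y ^ p) (p * x ^ (p - 1)) x :=
        Real.hasDerivAt_rpow_const (Or.inl (ne_of_gt hx))
      have h2 : HasDerivAt (fun y : ℝ => y ^ (p - 1)) ((p - 1) * x ^ (p - 1 - 1)) x :=
        Real.hasDerivAt_rpow_const (Or.inl (ne_of_gt hx))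
      exact (((h1.sub_const (B ^ p)).div_const p).sub
        ((((hasDerivAt_id x).sub_const B).mul (h2.add_const (B ^ (p - 1)))).div_const 2))
    have hmono : StrictMonoOn F (Set.Ici B) := by
      apply strictMonoOn_of_deriv_pos (convex_Ici B)
      · intro x hx
        exact (hasD x (lt_of_lt_of_le hB0 hx)).continuousAt.continuousWithinAt
      · intro x hx
        rw [interior_Ici] at hx
        have hxB : B < x := hx
        have hx0 : 0 < x := lt_trans hB0 hxB
        rw [(hasD x hx0).deriv]
        have hmvt := mvt_rpow (p - 1) B x (by linarith) (by linarith) hB0 hxB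
        have hpp : p * x ^ (p - 1) / p = x ^ (p - 1) := by
          field_simp
        rw [hpp]
        have : p - 1 - 1 = (p - 1) - 1 := by ring
        nlinarith [hmvt]
    have hFB : F B = 0 := by simp [hF]
    have := hmono (Set.self_mem_Ici) (by exact le_of_lt hBA : A ∈ Set.Ici B) hBA
    rw [hFB] at this
    have hFA : 0 < F A := this
    rw [hF] at hFA
    simp only at hFA
    linarith

/-- The quadratic-interpolation coefficients b_{n-l}, 2 ≤ l ≤ n, are positive. -/
theorem stmt_3 (T α : ℝ) (ζ ω : ℝ → ℝ) (n : ℕ)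
    (t : ℕ → ℝ) (ht : ∀ i j : ℕ, i < j → j ≤ n → t i < t j)
    (h0 : t 0 = 0) (hT : t n = T) (hn : 2 ≤ n)
    (hζ : StrictMonoOn ζ (Set.Icc 0 T))
    (hα0 : 0 < α) (hα1 : α < 1) (hω : 0 < ω (t n))
    (b : ℕ → ℝ)
    (hb : ∀ l, b l = (ω (t n))⁻¹ / Real.Gamma (2 - α) *
      (1 / (2 - α) *
          (((ζ (t n) - ζ (t (l - 1))) ^ (2 - α) - (ζ (t n) - ζ (t l)) ^ (2 - α)) /
            (ζ (t l) - ζ (t (l - 1))) ^ 2)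
        - 1 / 2 *
          (((ζ (t n) - ζ (t (l - 1))) ^ (1 - α) + (ζ (t n) - ζ (t l)) ^ (1 - α)) /
            (ζ (t l) - ζ (t (l - 1)))))) :
    ∀ l, 2 ≤ l → l ≤ n → 0 < b l := by
  intro l hl2 hln
  -- memberships
  have hmem : ∀ i : ℕ, 1 ≤ i → i ≤ n → t i ∈ Set.Icc (0:ℝ) T := by
    intro i h1 h2
    constructor
    · rw [← h0]; exact le_of_lt (ht 0 i h1 h2)
    · rcases eq_or_lt_of_le h2 with h | h
      · subst h; exact le_of_eq hT
      · rw [← hT]; exact le_of_lt (ht i n h le_rfl)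
  have hl1n : l - 1 ≤ n := le_trans (Nat.sub_le l 1) hln
  have hl1pos : 1 ≤ l - 1 := by omega
  have hll1 : l - 1 < l := by omega
  have ml1 := hmem (l - 1) hl1pos hl1n
  have ml := hmem l (by omega) hln
  have mn := hmem n (by omega) le_rfl
  set A := ζ (t n) - ζ (t (l - 1)) with hA
  set B := ζ (t n) - ζ (t l) with hB
  set h := ζ (t l) - ζ (t (l - 1)) with hh
  have hhpos : 0 < h := by
    have := hζ ml1 ml (ht (l - 1) l hll1 hln)
    simp [hh]; linarith
  have hBnn : 0 ≤ B := by
    rcases eq_or_lt_of_le hln with h | h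
    · subst h; simp [hB]
    · have := hζ ml mn (ht l n h le_rfl)
      simp [hB]; linarith
  have hBA : B < A := by simp only [hA, hB]; linarith
  have hAB : A - B = h := by simp only [hA, hB, hh]; ring
  have hp1 : (1:ℝ) < 2 - α := by linarith
  have hp2 : (2:ℝ) - α < 2 := by linarith
  have key := trapezoid_lt (2 - α) B A hp1 hp2 hBnn hBA
  have hexp : (2:ℝ) - α - 1 = 1 - α := by ring
  rw [hexp, hAB] at key
  rw [hb l]
  apply mul_pos
  · apply div_pos (inv_pos.mpr hω)
    exact Real.Gamma_pos_of_pos (by linarith)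
  · -- 0 < 1/(2-α) * ((A^(2-α) - B^(2-α))/h^2) - 1/2 * ((A^(1-α)+B^(1-α))/h)
    have hEq : 1 / (2 - α) * ((A ^ (2 - α) - B ^ (2 - α)) / h ^ 2)
        - 1 / 2 * ((A ^ (1 - α) + B ^ (1 - α)) / h)
        = ((A ^ (2 - α) - B ^ (2 - α)) / (2 - α)
            - h * (A ^ (1 - α) + B ^ (1 - α)) / 2) / h ^ 2 := by
      field_simp
    rw [hEq]
    apply div_pos _ (by positivity)
    linarith
end

section
/- For n = 2, with a_0, a_1 given by a_{2-l} = (ω(t_2)^{-1}/Γ(2-α))·((ζ(t_2)-ζ(t_{l-1}))^{1-α} - (ζ(t_2)-ζ(t_l))^{1-α})/(ζ(t_l)-ζ(t_{l-1})) for l = 1,2, and b_0 given by the quadratic-interpolation coefficient formula at l = 2, the coefficients λ_0 = a_0 + b_0, λ_1 = a_1 - a_0 - 2b_0, λ_2 = -a_1 + b_0 satisfy λ_0 > 0 and λ_0 + λ_1 + λ_2 = 0. -/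
open Real

/-- For n = 2: with a_0, a_1 the linear coefficients and b_0 the quadratic
coefficient at l = 2, the weights λ_0 = a_0 + b_0, λ_1 = a_1 - a_0 - 2b_0,
λ_2 = -a_1 + b_0 satisfy λ_0 > 0 and λ_0 + λ_1 + λ_2 = 0. -/
theorem stmt_5 (α : ℝ) (ζ ω : ℝ → ℝ) (t : ℕ → ℝ)
    (hα0 : 0 < α) (hα1 : α < 1)
    (ht01 : ζ (t 0) < ζ (t 1)) (ht12 : ζ (t 1) < ζ (t 2))
    (hω : 0 < ω (t 2))
    (a : ℕ → ℝ)
    (ha : ∀ l, 1 ≤ l → l ≤ 2 → a (2 - l) = (ω (t 2))⁻¹ / Real.Gamma (2 - α) *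
      (((ζ (t 2) - ζ (t (l - 1))) ^ (1 - α) - (ζ (t 2) - ζ (t l)) ^ (1 - α)) /
        (ζ (t l) - ζ (t (l - 1)))))
    (b0 : ℝ)
    (hb0 : b0 = (ω (t 2))⁻¹ / Real.Gamma (2 - α) *
      (1 / (2 - α) * ((ζ (t 2) - ζ (t 1)) ^ (2 - α) / (ζ (t 2) - ζ (t 1)) ^ 2)
        - 1 / 2 * ((ζ (t 2) - ζ (t 1)) ^ (1 - α) / (ζ (t 2) - ζ (t 1)))))
    (lam0 lam1 lam2 : ℝ)
    (hl0 : lam0 = a 0 + b0)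
    (hl1 : lam1 = a 1 - a 0 - 2 * b0)
    (hl2 : lam2 = -(a 1) + b0) :
    0 < lam0 ∧ lam0 + lam1 + lam2 = 0 := by
  set h : ℝ := ζ (t 2) - ζ (t 1) with hh
  have hpos : 0 < h := by simp [hh]; linarith
  have hC : 0 < (ω (t 2))⁻¹ / Real.Gamma (2 - α) :=
    div_pos (inv_pos.mpr hω) (Real.Gamma_pos_of_pos (by linarith))
  have ha0 := ha 2 (by norm_num) (by norm_num)
  have hz : ((0:ℝ)) ^ (1 - α) = 0 := Real.zero_rpow (by linarith)
  have h1 : 0 < h ^ (1 - α) := Real.rpow_pos_of_pos hpos _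
  have ha0' : a 0 = (ω (t 2))⁻¹ / Real.Gamma (2 - α) * (h ^ (1 - α) / h) := by
    simpa [hz, hh] using ha0
  have h2 : h ^ (2 - α) = h ^ (1 - α) * h := by
    rw [show (2 - α) = (1 - α) + 1 by ring, Real.rpow_add_one hpos.ne']
  have hsq : h ^ (2 - α) / h ^ 2 = h ^ (1 - α) / h := by
    rw [h2, sq, mul_div_mul_right _ _ hpos.ne']
  have hb0' : b0 = (ω (t 2))⁻¹ / Real.Gamma (2 - α) *
      ((h ^ (1 - α) / h) * (1 / (2 - α) - 1 / 2)) := by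
    rw [hb0, hsq]; ring
  have hfrac : 0 < 1 / (2 - α) - 1 / 2 := by
    have h2α : (0:ℝ) < 2 - α := by linarith
    have heq : 1 / (2 - α) - 1 / 2 = α / (2 * (2 - α)) := by field_simp; ring_nf
    rw [heq]; positivity
  have ha0pos : 0 < a 0 := by
    rw [ha0']; exact mul_pos hC (div_pos h1 hpos)
  have hb0pos : 0 < b0 := by
    rw [hb0']; exact mul_pos hC (mul_pos (div_pos h1 hpos) hfrac)
  constructor
  · rw [hl0]; linarith
  · rw [hl0, hl1, hl2]; ring
end
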